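/- arXiv:2410.19506 — 2 statements merged into one kernel-verified Lean document; each statement's English description precedes it below -/
import Mathlib

section
/- Let f : E → ℝ be convex, differentiable with L-Lipschitz gradient, and let 0 < γ < 1/L. Then the map Id - γ∇f is firmly nonexpansive: for all x, y, ‖(x - γ∇f(x)) - (y - γ∇f(y))‖² + ‖γ∇f(x) - γ∇f(y)‖² ≤ ‖x - y‖². -/
/-!
Convexity puts `f` above its tangent planes, and the Lipschitz gradient puts it below the
parabolas `f x + ⟪∇f x, y - x⟫ + L/2 ‖y - x‖²` (descent lemma). Playing the two bounds against
each other at a well-chosen point gives `f b + ⟪∇f b, a - b⟫ + ‖∇f a - ∇f b‖² / (2L) ≤ f a`;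
adding this to its copy with `a`, `b` swapped yields cocoercivity
`‖∇f x - ∇f y‖² / L ≤ ⟪∇f x - ∇f y, x - y⟫`. For `w = γ (∇f x - ∇f y)` and `u = x - y`,
firm nonexpansiveness `‖u - w‖² + ‖w‖² ≤ ‖u‖²` is exactly `‖w‖² ≤ ⟪w, u⟫`, which follows from
cocoercivity once `γ ≤ 1/L`.
-/

open scoped RealInnerProductSpace

section Gradient

variable {E : Type*} [NormedAddCommGroup E] [InnerProductSpace ℝ E] [CompleteSpace E]
  {f : E → ℝ}

theorem HasGradientAt.hasDerivAt_comp_add_smul {g x v : E} {t : ℝ}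
    (hf : HasGradientAt f g (x + t • v)) :
    HasDerivAt (fun s : ℝ => f (x + s • v)) ⟪g, v⟫ t := by
  have hline : HasDerivAt (fun s : ℝ => x + s • v) v t := by
    simpa using ((hasDerivAt_id t).smul_const v).const_add x
  simpa [Function.comp_def] using hf.hasFDerivAt.comp_hasDerivAt t hline

theorem ConvexOn.add_inner_le_of_hasGradientAt {s : Set E} (hconv : ConvexOn ℝ s f)
    {g x y : E} (hx : x ∈ s) (hy : y ∈ s) (hf : HasGradientAt f g x) :
    f x + ⟪g, y - x⟫ ≤ f y := by
  have hline : (fun t : ℝ => f (x + t • (y - x))) = f ∘ AffineMap.lineMap x y := by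
    ext t
    simp [AffineMap.lineMap_apply, add_comm]
  have hconv_line :
      ConvexOn ℝ (AffineMap.lineMap x y ⁻¹' s) (fun t : ℝ => f (x + t • (y - x))) :=
    hline ▸ hconv.comp_affineMap _
  have hderiv : HasDerivAt (fun t : ℝ => f (x + t • (y - x))) ⟪g, y - x⟫ 0 :=
    HasGradientAt.hasDerivAt_comp_add_smul (by simpa using hf)
  have := hconv_line.le_slope_of_hasDerivAt (by simpa) (by simpa) zero_lt_one hderiv
  simp only [slope_def_field, one_smul, zero_smul, add_zero, sub_zero, div_one,
    add_sub_cancel] at this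
  linarith

variable {f' : E → E} {L : ℝ}

theorem le_add_inner_add_of_lipschitz_gradient (hf : ∀ x, HasGradientAt f (f' x) x)
    (hlip : ∀ x y, ‖f' x - f' y‖ ≤ L * ‖x - y‖) (x y : E) :
    f y ≤ f x + ⟪f' x, y - x⟫ + L / 2 * ‖y - x‖ ^ 2 := by
  set v := y - x
  have hderiv : ∀ t : ℝ, HasDerivAt (fun s : ℝ => f (x + s • v) - s * ⟪f' x, v⟫)
      (⟪f' (x + t • v), v⟫ - ⟪f' x, v⟫) t := fun t =>
    (hf _).hasDerivAt_comp_add_smul.sub (by simpa using (hasDerivAt_id t).mul_const ⟪f' x, v⟫)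
  have hparabola : ∀ t : ℝ, HasDerivAt (fun s : ℝ => f x + L / 2 * ‖v‖ ^ 2 * s ^ 2)
      (L * ‖v‖ ^ 2 * t) t := fun t =>
    (((hasDerivAt_pow 2 t).const_mul (L / 2 * ‖v‖ ^ 2)).const_add (f x)).congr_deriv (by ring)
  have hbound : ∀ t ∈ Set.Ico (0 : ℝ) 1,
      ⟪f' (x + t • v), v⟫ - ⟪f' x, v⟫ ≤ L * ‖v‖ ^ 2 * t := fun t ht => calc
    ⟪f' (x + t • v), v⟫ - ⟪f' x, v⟫ = ⟪f' (x + t • v) - f' x, v⟫ := (inner_sub_left _ _ _).symm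
    _ ≤ ‖f' (x + t • v) - f' x‖ * ‖v‖ := real_inner_le_norm _ _
    _ ≤ L * ‖(x + t • v) - x‖ * ‖v‖ := by gcongr; exact hlip _ _
    _ = L * ‖v‖ ^ 2 * t := by
      rw [add_sub_cancel_left, norm_smul, Real.norm_of_nonneg ht.1]; ring
  have := image_le_of_deriv_right_le_deriv_boundary
    (fun t _ => (hderiv t).continuousAt.continuousWithinAt) (fun t _ => (hderiv t).hasDerivWithinAt)
    (by simp) (fun t _ => (hparabola t).continuousAt.continuousWithinAt)
    (fun t _ => (hparabola t).hasDerivWithinAt) hbound (Set.right_mem_Icc.2 zero_le_one)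
  simp only [one_smul, one_mul, one_pow, mul_one, v, add_sub_cancel] at this
  linarith

theorem add_inner_add_norm_sub_sq_le_of_lipschitz_gradient (hconv : ConvexOn ℝ Set.univ f)
    (hf : ∀ x, HasGradientAt f (f' x) x) (hlip : ∀ x y, ‖f' x - f' y‖ ≤ L * ‖x - y‖) (hL : 0 < L)
    (a b : E) : f b + ⟪f' b, a - b⟫ + ‖f' a - f' b‖ ^ 2 / (2 * L) ≤ f a := by
  set d := f' a - f' b
  -- `z` minimises the descent-lemma upper bound at `a` for `f - ⟪f' b, ·⟫`, which is minimal at `b`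
  set z := a - L⁻¹ • d
  have hlower := hconv.add_inner_le_of_hasGradientAt (Set.mem_univ b) (Set.mem_univ z) (hf b)
  have hupper := le_add_inner_add_of_lipschitz_gradient hf hlip a z
  have hza : z - a = -(L⁻¹ • d) := by simp [z]
  have hzb : z - b = (a - b) - L⁻¹ • d := by simp [z]; abel
  rw [hzb, inner_sub_right, real_inner_smul_right] at hlower
  rw [hza, inner_neg_right, real_inner_smul_right, norm_neg, norm_smul,
    Real.norm_of_nonneg (by positivity)] at hupper
  have hd : ⟪f' a, d⟫ - ⟪f' b, d⟫ = ‖d‖ ^ 2 := by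
    rw [← inner_sub_left, real_inner_self_eq_norm_sq]
  have hLL : L * L⁻¹ = 1 := mul_inv_cancel₀ hL.ne'
  linear_combination hlower + hupper - L⁻¹ * hd + ‖d‖ ^ 2 / 2 * L⁻¹ * hLL

theorem norm_sub_sq_div_le_inner_of_lipschitz_gradient (hconv : ConvexOn ℝ Set.univ f)
    (hf : ∀ x, HasGradientAt f (f' x) x) (hlip : ∀ x y, ‖f' x - f' y‖ ≤ L * ‖x - y‖) (hL : 0 < L)
    (x y : E) : ‖f' x - f' y‖ ^ 2 / L ≤ ⟪f' x - f' y, x - y⟫ := by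
  have hxy := add_inner_add_norm_sub_sq_le_of_lipschitz_gradient hconv hf hlip hL x y
  have hyx := add_inner_add_norm_sub_sq_le_of_lipschitz_gradient hconv hf hlip hL y x
  rw [norm_sub_rev (f' y)] at hyx
  have hinner : ⟪f' x - f' y, x - y⟫ = -⟪f' x, y - x⟫ - ⟪f' y, x - y⟫ := by
    rw [inner_sub_left, ← inner_neg_right, neg_sub]
  have hhalves : ‖f' x - f' y‖ ^ 2 / (2 * L) + ‖f' x - f' y‖ ^ 2 / (2 * L)
      = ‖f' x - f' y‖ ^ 2 / L := by ring
  rw [hinner]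
  linarith

end Gradient

theorem norm_sub_sq_add_norm_sq_le_iff {E : Type*} [NormedAddCommGroup E] [InnerProductSpace ℝ E]
    (u w : E) : ‖u - w‖ ^ 2 + ‖w‖ ^ 2 ≤ ‖u‖ ^ 2 ↔ ‖w‖ ^ 2 ≤ ⟪w, u⟫ := by
  rw [norm_sub_sq_real, real_inner_comm]
  constructor <;> intro h <;> linarith

theorem stmt_4_general {E : Type*} [NormedAddCommGroup E] [InnerProductSpace ℝ E]
    [FiniteDimensional ℝ E]
    (f : E → ℝ) (f' : E → E) (L γ : ℝ)
    (hconv : ConvexOn ℝ Set.univ f)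
    (hdiff : ∀ x, HasGradientAt f (f' x) x)
    (hlip : ∀ x y, ‖f' x - f' y‖ ≤ L * ‖x - y‖)
    (hγ0 : 0 < γ) (hγ : γ < 1 / L) :
    ∀ x y : E,
      ‖(x - γ • f' x) - (y - γ • f' y)‖ ^ 2 + ‖γ • f' x - γ • f' y‖ ^ 2
        ≤ ‖x - y‖ ^ 2 := by
  intro x y
  have hL : 0 < L := one_div_pos.mp (hγ0.trans hγ)
  have hcoco := norm_sub_sq_div_le_inner_of_lipschitz_gradient hconv hdiff hlip hL x y
  set d := f' x - f' y
  have hstep : (x - γ • f' x) - (y - γ • f' y) = (x - y) - γ • d := by simp only [d]; module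
  rw [hstep, ← smul_sub, norm_sub_sq_add_norm_sq_le_iff, norm_smul, mul_pow, real_inner_smul_left,
    Real.norm_of_nonneg hγ0.le, sq γ, mul_assoc]
  gcongr
  calc γ * ‖d‖ ^ 2 ≤ ‖d‖ ^ 2 / L := by rw [div_eq_inv_mul, ← one_div]; gcongr
    _ ≤ ⟪d, x - y⟫ := hcoco

/-- The gradient descent operator `Id - γ∇f` is firmly nonexpansive for `0 < γ < 1/L`. -/
theorem stmt_4 {E : Type*} [NormedAddCommGroup E] [InnerProductSpace ℝ E]
    [FiniteDimensional ℝ E]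
    (f : E → ℝ) (f' : E → E) (L γ : ℝ) (hL : 0 < L)
    (hconv : ConvexOn ℝ Set.univ f)
    (hdiff : ∀ x, HasGradientAt f (f' x) x)
    (hlip : ∀ x y, ‖f' x - f' y‖ ≤ L * ‖x - y‖)
    (hγ0 : 0 < γ) (hγ : γ < 1 / L) :
    ∀ x y : E,
      ‖(x - γ • f' x) - (y - γ • f' y)‖ ^ 2 + ‖γ • f' x - γ • f' y‖ ^ 2
        ≤ ‖x - y‖ ^ 2 :=
  stmt_4_general f f' L γ hconv hdiff hlip hγ0 hγ
end

section
/- Let f : E → ℝ be L-smooth and α-strongly convex with minimizer x*, and define the gradient descent sequence xₙ₊₁ = xₙ - (1/L)∇f(xₙ). Then f(xₙ) - f(x*) ≤ (1 - α/L)ⁿ (f(x₀) - f(x*)) for all n. -/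
/-!
Strong convexity gives the Polyak–Łojasiewicz inequality `2α (f x - f y) ≤ ‖∇f x‖²`, while the
`L`-Lipschitz gradient gives the descent bound `f (x - ∇f x / L) ≤ f x - ‖∇f x‖² / (2L)`.
Together they contract the gap `f xₙ - f x*` by the factor `1 - α/L` at every step.
-/

open scoped RealInnerProductSpace
open Set AffineMap

theorem ConvexOn.add_le_of_hasFDerivAt {F : Type*} [NormedAddCommGroup F] [NormedSpace ℝ F]
    {g : F → ℝ} {g' : F →L[ℝ] ℝ} {x : F} (hg : ConvexOn ℝ univ g) (hg' : HasFDerivAt g g' x)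
    (y : F) : g x + g' (y - x) ≤ g y := by
  have hconv : ConvexOn ℝ univ fun t : ℝ ↦ g (lineMap x y t) :=
    preimage_univ ▸ hg.comp_affineMap (lineMap x y)
  have hderiv : HasDerivAt (fun t : ℝ ↦ g (lineMap x y t)) (g' (y - x)) 0 :=
    hg'.comp_hasDerivAt_of_eq 0 hasDerivAt_lineMap (lineMap_apply_zero x y).symm
  have hslope := hconv.le_slope_of_hasDerivAt (mem_univ 0) (mem_univ 1) one_pos hderiv
  simp only [slope_def_field, lineMap_apply_zero, lineMap_apply_one, sub_zero, div_one] at hslope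
  linarith

section Smooth

variable {E : Type*} [NormedAddCommGroup E] [InnerProductSpace ℝ E] [CompleteSpace E] {f : E → ℝ}

theorem HasGradientAt.hasDerivAt_comp_lineMap {g x y : E} {t : ℝ}
    (hf : HasGradientAt f g (lineMap x y t)) :
    HasDerivAt (fun t ↦ f (lineMap x y t)) ⟪g, y - x⟫ t := by
  have := hf.hasFDerivAt.comp_hasDerivAt t hasDerivAt_lineMap
  simp only [InnerProductSpace.toDual_apply_apply] at this
  exact this

theorem StrongConvexOn.add_inner_add_le_of_hasGradientAt {m : ℝ} {g x : E}
    (hf : StrongConvexOn univ m f) (hg : HasGradientAt f g x) (y : E) :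
    f x + ⟪g, y - x⟫ + m / 2 * ‖y - x‖ ^ 2 ≤ f y := by
  have hderiv := hg.hasFDerivAt.sub ((hasStrictFDerivAt_norm_sq x).hasFDerivAt.const_mul (m / 2))
  have := (strongConvexOn_iff_convex.mp hf).add_le_of_hasFDerivAt hderiv y
  simp only [sub_apply, InnerProductSpace.toDual_apply_apply,
    smul_apply, innerSL_apply_apply, smul_eq_mul, nsmul_eq_mul,
    Nat.cast_ofNat, inner_sub_right, real_inner_self_eq_norm_sq] at this
  rw [norm_sub_sq_real, real_inner_comm x y, inner_sub_right]
  linarith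

/-- The Polyak–Łojasiewicz inequality, from expanding `0 ≤ ‖g + m • (y - x)‖ ^ 2`. -/
theorem StrongConvexOn.two_mul_sub_le_norm_sq_of_hasGradientAt {m : ℝ} {g x : E}
    (hf : StrongConvexOn univ m f) (hm : 0 ≤ m) (hg : HasGradientAt f g x) (y : E) :
    2 * m * (f x - f y) ≤ ‖g‖ ^ 2 := by
  have hfirst := hf.add_inner_add_le_of_hasGradientAt hg y
  have hsq : 0 ≤ ‖g + m • (y - x)‖ ^ 2 := sq_nonneg _
  rw [norm_add_sq_real, real_inner_smul_right, norm_smul, Real.norm_of_nonneg hm] at hsq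
  nlinarith

theorem le_add_inner_add_mul_norm_sq_of_lipschitz_gradient {f' : E → E} {L : ℝ}
    (hf : ∀ x, HasGradientAt f (f' x) x) (hlip : ∀ x y, ‖f' x - f' y‖ ≤ L * ‖x - y‖) (x y : E) :
    f y ≤ f x + ⟪f' x, y - x⟫ + L / 2 * ‖y - x‖ ^ 2 := by
  set φ : ℝ → ℝ := fun t ↦ f (lineMap x y t) - f x - t * ⟪f' x, y - x⟫
  have hφ : ∀ t, HasDerivAt φ (⟪f' (lineMap x y t) - f' x, y - x⟫) t := fun t ↦ by
    rw [inner_sub_left]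
    exact (((hf _).hasDerivAt_comp_lineMap).sub_const (f x)).fun_sub
      (hasDerivAt_mul_const ⟪f' x, y - x⟫)
  have hB : ∀ t, HasDerivAt (fun t : ℝ ↦ L / 2 * t ^ 2 * ‖y - x‖ ^ 2) (L * t * ‖y - x‖ ^ 2) t :=
    fun t ↦ (((hasDerivAt_pow 2 t).const_mul (L / 2)).mul_const _).congr_deriv (by push_cast; ring)
  have hbound : ∀ t ∈ Ico (0 : ℝ) 1, ⟪f' (lineMap x y t) - f' x, y - x⟫ ≤ L * t * ‖y - x‖ ^ 2 :=
    fun t ht ↦ calc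
      ⟪f' (lineMap x y t) - f' x, y - x⟫ ≤ ‖f' (lineMap x y t) - f' x‖ * ‖y - x‖ :=
        real_inner_le_norm _ _
      _ ≤ L * ‖lineMap x y t - x‖ * ‖y - x‖ := by gcongr; exact hlip _ _
      _ = L * t * ‖y - x‖ ^ 2 := by
        rw [← dist_eq_norm, dist_lineMap_left, Real.norm_of_nonneg ht.1, dist_eq_norm']; ring
  have := image_le_of_deriv_right_le_deriv_boundary (a := 0) (b := 1)
    (fun t _ ↦ (hφ t).continuousAt.continuousWithinAt) (fun t _ ↦ (hφ t).hasDerivWithinAt)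
    (by simp [φ]) (fun t _ ↦ (hB t).continuousAt.continuousWithinAt)
    (fun t _ ↦ (hB t).hasDerivWithinAt) hbound (right_mem_Icc.mpr zero_le_one)
  simp only [φ, lineMap_apply_one, one_mul, one_pow] at this
  linarith

theorem le_sub_norm_sq_of_gradient_step {f' : E → E} {L : ℝ} (hL : 0 < L)
    (hf : ∀ x, HasGradientAt f (f' x) x) (hlip : ∀ x y, ‖f' x - f' y‖ ≤ L * ‖x - y‖) (x : E) :
    f (x - (1 / L) • f' x) ≤ f x - ‖f' x‖ ^ 2 / (2 * L) := by
  have := le_add_inner_add_mul_norm_sq_of_lipschitz_gradient hf hlip x (x - (1 / L) • f' x)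
  rw [sub_sub_cancel_left, inner_neg_right, norm_neg, real_inner_smul_right,
    real_inner_self_eq_norm_sq, norm_smul, Real.norm_of_nonneg (by positivity)] at this
  convert this using 1
  field_simp
  ring

theorem StrongConvexOn.sub_le_mul_sub_of_gradient_step {f' : E → E} {L m : ℝ}
    (hsc : StrongConvexOn univ m f) (hm : 0 ≤ m) (hL : 0 < L)
    (hf : ∀ x, HasGradientAt f (f' x) x) (hlip : ∀ x y, ‖f' x - f' y‖ ≤ L * ‖x - y‖) (x y : E) :
    f (x - (1 / L) • f' x) - f y ≤ (1 - m / L) * (f x - f y) := by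
  have hdescent := le_sub_norm_sq_of_gradient_step hL hf hlip x
  have hPL := hsc.two_mul_sub_le_norm_sq_of_hasGradientAt hm (hf x) y
  calc f (x - (1 / L) • f' x) - f y ≤ f x - f y - ‖f' x‖ ^ 2 / (2 * L) := by linarith
    _ ≤ f x - f y - 2 * m * (f x - f y) / (2 * L) := by gcongr
    _ = (1 - m / L) * (f x - f y) := by field_simp

end Smooth

theorem stmt_9_general {E : Type*} [NormedAddCommGroup E] [InnerProductSpace ℝ E]
    [FiniteDimensional ℝ E]
    (f : E → ℝ) (f' : E → E) (L α : ℝ) (hα : 0 < α) (hαL : α ≤ L)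
    (hsc : ConvexOn ℝ Set.univ (fun x => f x - α / 2 * ‖x‖ ^ 2))
    (hdiff : ∀ x, HasGradientAt f (f' x) x)
    (hlip : ∀ x y, ‖f' x - f' y‖ ≤ L * ‖x - y‖)
    (xstar : E)
    (x : ℕ → E)
    (hiter : ∀ n, x (n + 1) = x n - (1 / L) • f' (x n)) :
    ∀ n : ℕ, f (x n) - f xstar ≤ (1 - α / L) ^ n * (f (x 0) - f xstar) := by
  have hL : 0 < L := hα.trans_le hαL
  have hrate : 0 ≤ 1 - α / L := sub_nonneg.mpr ((div_le_one hL).mpr hαL)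
  have hstep := (strongConvexOn_iff_convex.mpr hsc).sub_le_mul_sub_of_gradient_step hα.le hL
    hdiff hlip
  intro n
  refine le_geom (u := fun n ↦ f (x n) - f xstar) hrate n fun k _ ↦ ?_
  simpa only [hiter k] using hstep (x k) xstar

/-- Linear convergence rate of gradient descent with step `1/L` for an
`L`-smooth, `α`-strongly convex function. -/
theorem stmt_9 {E : Type*} [NormedAddCommGroup E] [InnerProductSpace ℝ E]
    [FiniteDimensional ℝ E]
    (f : E → ℝ) (f' : E → E) (L α : ℝ) (hα : 0 < α) (hαL : α ≤ L)
    (hsc : ConvexOn ℝ Set.univ (fun x => f x - α / 2 * ‖x‖ ^ 2))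
    (hdiff : ∀ x, HasGradientAt f (f' x) x)
    (hlip : ∀ x y, ‖f' x - f' y‖ ≤ L * ‖x - y‖)
    (xstar : E) (hmin : ∀ x, f xstar ≤ f x)
    (x : ℕ → E)
    (hiter : ∀ n, x (n + 1) = x n - (1 / L) • f' (x n)) :
    ∀ n : ℕ, f (x n) - f xstar ≤ (1 - α / L) ^ n * (f (x 0) - f xstar) :=
  stmt_9_general f f' L α hα hαL hsc hdiff hlip xstar x hiter
end
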